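/- arXiv:1907.04559 — 8 statements merged into one kernel-verified Lean document; each statement's English description precedes it below -/
import Mathlib

section
/- Let n ≥ 10, ℓ = n + 20, and m = ⌊n²/100⌋. For 0 ≤ t, j ≤ m − 1, if j − t ≡ 0 or 1 (mod n) and j − t ≡ 0 or 1 (mod ℓ), then j − t = 0 or j − t = 1 (as integers). -/
lemma aux_key (n : ℕ) (hn : 10 ≤ n) (e c : ℤ) (hc : c = 0 ∨ c = 1 ∨ c = -1)
    (hdn : (n : ℤ) ∣ e) (hdl : ((n : ℤ) + 20) ∣ e + c)
    (hbound : 100 * |e| ≤ (n : ℤ) ^ 2) : e = 0 ∧ c = 0 := by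
  obtain ⟨a, ha⟩ := hdn
  have hn' : (10 : ℤ) ≤ n := by exact_mod_cast hn
  have hae : |e| = (n : ℤ) * |a| := by rw [ha, abs_mul, abs_of_nonneg (by linarith)]
  have h100a : 100 * |a| ≤ (n : ℤ) := by
    have : (n : ℤ) * (100 * |a|) ≤ (n : ℤ) * n := by
      rw [sq] at hbound; nlinarith [hae]
    exact le_of_mul_le_mul_left this (by linarith)
  have hdvd : ((n : ℤ) + 20) ∣ 20 * a - c := by
    have : 20 * a - c = ((n : ℤ) + 20) * a - (e + c) := by rw [ha]; ring
    rw [this]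
    exact dvd_sub (Dvd.intro a rfl) hdl
  have habs : |20 * a - c| < (n : ℤ) + 20 := by
    have h1 : |20 * a - c| ≤ 20 * |a| + |c| := by
      calc |20 * a - c| ≤ |20 * a| + |c| := abs_sub _ _
        _ = 20 * |a| + |c| := by rw [abs_mul]; norm_num
    have hc1 : |c| ≤ 1 := by rcases hc with h | h | h <;> simp [h]
    linarith
  have hz : 20 * a - c = 0 := Int.eq_zero_of_abs_lt_dvd hdvd habs
  have hac : a = 0 ∧ c = 0 := by omega
  exact ⟨by rw [ha, hac.1, mul_zero], hac.2⟩

theorem stmt_2 (n ℓ m : ℕ) (hn : 10 ≤ n) (hℓ : ℓ = n + 20) (hm : m = n ^ 2 / 100)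
    (t j : ℕ) (ht : t ≤ m - 1) (hj : j ≤ m - 1)
    (h₁ : (j : ℤ) - t ≡ 0 [ZMOD (n : ℤ)] ∨ (j : ℤ) - t ≡ 1 [ZMOD (n : ℤ)])
    (h₂ : (j : ℤ) - t ≡ 0 [ZMOD (ℓ : ℤ)] ∨ (j : ℤ) - t ≡ 1 [ZMOD (ℓ : ℤ)]) :
    (j : ℤ) - t = 0 ∨ (j : ℤ) - t = 1 := by
  rcases Nat.eq_zero_or_pos m with hm0 | hm0
  · have htz : t = 0 := by omega
    have hjz : j = 0 := by omega
    subst htz hjz; simp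
  set d : ℤ := (j : ℤ) - t with hd
  have hmn : 100 * m ≤ n ^ 2 := by
    rw [hm, mul_comm]; exact Nat.div_mul_le_self _ _
  have hmn' : 100 * (m : ℤ) ≤ (n : ℤ) ^ 2 := by exact_mod_cast hmn
  have hdb : |d| ≤ (m : ℤ) - 1 := by
    have h1 : (t : ℤ) ≤ (m : ℤ) - 1 := by omega
    have h2 : (j : ℤ) ≤ (m : ℤ) - 1 := by omega
    rw [abs_le]; constructor <;> [skip; skip] <;> simp [hd] <;> omega
  have hℓz : (ℓ : ℤ) = (n : ℤ) + 20 := by rw [hℓ]; push_cast; ring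
  rw [hℓz] at h₂
  have hmpos : (1 : ℤ) ≤ m := by exact_mod_cast hm0
  rcases h₁ with h₁ | h₁
  · have hdn : (n : ℤ) ∣ d := Int.modEq_zero_iff_dvd.mp h₁
    have hbound : 100 * |d| ≤ (n : ℤ) ^ 2 := by linarith
    rcases h₂ with h₂ | h₂
    · have hdl : ((n : ℤ) + 20) ∣ d + 0 := by
        rw [add_zero]; exact Int.modEq_zero_iff_dvd.mp h₂
      exact Or.inl (aux_key n hn d 0 (Or.inl rfl) hdn hdl hbound).1
    · have hdl : ((n : ℤ) + 20) ∣ d + (-1) := by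
        have := Int.ModEq.dvd h₂
        simpa [sub_eq_add_neg] using (dvd_neg.mpr this)
      have := aux_key n hn d (-1) (Or.inr (Or.inr rfl)) hdn hdl hbound
      omega
  · have hdn : (n : ℤ) ∣ d - 1 := by
      have := Int.ModEq.dvd h₁
      simpa using (dvd_neg.mpr this)
    have hbound : 100 * |d - 1| ≤ (n : ℤ) ^ 2 := by
      have : |d - 1| ≤ |d| + 1 := by
        calc |d - 1| ≤ |d| + |(1 : ℤ)| := abs_sub _ _
          _ = |d| + 1 := by norm_num
      linarith
    rcases h₂ with h₂ | h₂
    · have hdl : ((n : ℤ) + 20) ∣ (d - 1) + 1 := by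
        rw [sub_add_cancel]; exact Int.modEq_zero_iff_dvd.mp h₂
      have := aux_key n hn (d - 1) 1 (Or.inr (Or.inl rfl)) hdn hdl hbound
      omega
    · have hdl : ((n : ℤ) + 20) ∣ (d - 1) + 0 := by
        rw [add_zero]
        have := Int.ModEq.dvd h₂
        simpa using (dvd_neg.mpr this)
      have := aux_key n hn (d - 1) 0 (Or.inl rfl) hdn hdl hbound
      omega
end

section
/- For all n ≥ 1 and r ≥ 3, M_r(n) ≤ M_{r+1}(n+1), where M_r(n) is the maximum, over starting graphs G₀ ⊆ Kₙ, of the running time of the K_r-bootstrap percolation process. Specifically: if v is a new vertex joined to all vertices of Kₙ, then for any starting graph G₀ ⊆ Kₙ, the K_{r+1}-process on Kₙ ∨ v starting from G₀ ∨ v adds exactly the same edges at each step as the K_r-process on Kₙ starting from G₀, hence runs for exactly as many steps. -/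
/-- One step of the `K_r`-bootstrap process: an uninfected pair `{u,v}` becomes an edge
if there is an `r`-set containing `u` and `v` all of whose pairs, except possibly `{u,v}`,
are already edges (i.e. adding `{u,v}` creates a new copy of `K_r` using `{u,v}`). -/
def krStep (r : ℕ) {V : Type*} (G : SimpleGraph V) : SimpleGraph V :=
  SimpleGraph.fromRel (fun u v => G.Adj u v ∨
    ∃ s : Finset V, u ∈ s ∧ v ∈ s ∧ s.card = r ∧
      ∀ a ∈ s, ∀ b ∈ s, a ≠ b → ¬(a = u ∧ b = v) → ¬(a = v ∧ b = u) → G.Adj a b)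

/-- `maxRunTime r n` is `M_r(n)`: the maximum `t` such that some starting graph `G₀ ⊆ Kₙ`
satisfies `G_t ≠ G_{t-1}` in the `K_r`-bootstrap process. -/
noncomputable def maxRunTime (r n : ℕ) : ℕ :=
  sSup {t : ℕ | ∃ G₀ : SimpleGraph (Fin n), (krStep r)^[t] G₀ ≠ (krStep r)^[t - 1] G₀}

/-- `cone G = G ∨ v`: a new vertex (`Fin.last n`) joined to all vertices of `G`. -/
def cone {n : ℕ} (G : SimpleGraph (Fin n)) : SimpleGraph (Fin (n + 1)) :=
  SimpleGraph.fromRel (fun u v =>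
    u = Fin.last n ∨ v = Fin.last n ∨
      ∃ a b : Fin n, u = a.castSucc ∧ v = b.castSucc ∧ G.Adj a b)

/-!
The apex of the cone `G ∨ v` is adjacent to every vertex, so a copy of `K_{r+1}` through a base
pair `ab` can be enlarged by the apex and then shrunk, away from `a` and `b` (possible as
`r ≥ 2`), to one containing the apex; deleting the apex leaves a `K_r` through `ab` in the base,
and conversely. Thus one `K_{r+1}`-step on `G ∨ v` is the cone over one `K_r`-step on `G`. As the
cone is injective, every running time on `n` vertices is a running time on `n + 1` vertices; these
are bounded since the process is inflationary on a finite set of graphs.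
-/

open Finset SimpleGraph

section Iterate

variable {α : Type*} {f : α → α} {x : α}

theorem Function.iterate_eq_of_map_iterate_eq {i k : ℕ} (h : f (f^[i] x) = f^[i] x)
    (hik : i ≤ k) : f^[k] x = f^[i] x := by
  obtain ⟨d, rfl⟩ := Nat.exists_eq_add_of_le hik
  rw [add_comm, Function.iterate_add_apply, Function.iterate_fixed h]

theorem lt_card_of_iterate_ne [PartialOrder α] [Finite α] (hf : id ≤ f) {t : ℕ}
    (ht : f^[t] x ≠ f^[t - 1] x) : t < Nat.card α := by
  -- an orbit that stops moving stays put, so its first `t + 1` points strictly increase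
  have hstrict : StrictMono fun i : Fin (t + 1) => f^[i] x := by
    refine Fin.strictMono_iff_lt_succ.2 fun i => lt_of_le_of_ne ?_ fun h => ht ?_
    · simpa [Function.iterate_succ_apply'] using hf (f^[i] x)
    · have hfix : f (f^[i] x) = f^[i] x := by simpa [Function.iterate_succ_apply'] using h.symm
      rw [Function.iterate_eq_of_map_iterate_eq (k := t) hfix (by omega),
        Function.iterate_eq_of_map_iterate_eq (k := t - 1) hfix (by omega)]
  simpa using Nat.card_le_card_of_injective _ hstrict.injective

theorem bddAbove_setOf_iterate_ne [PartialOrder α] [Finite α] (hf : id ≤ f) :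
    BddAbove {t : ℕ | ∃ x, f^[t] x ≠ f^[t - 1] x} :=
  ⟨Nat.card α, fun _ ⟨_, ht⟩ => (lt_card_of_iterate_ne hf ht).le⟩

end Iterate

section KrStep

variable {V : Type*} {G : SimpleGraph V} {u v : V}

theorem isClique_sup_edge_iff {s : Finset V} :
    (G ⊔ edge u v).IsClique (s : Set V) ↔
      ∀ a ∈ s, ∀ b ∈ s, a ≠ b → ¬(a = u ∧ b = v) → ¬(a = v ∧ b = u) → G.Adj a b := by
  simp only [IsClique, Set.Pairwise, mem_coe, sup_adj, edge_adj]
  grind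

theorem krStep_adj {r : ℕ} :
    (krStep r G).Adj u v ↔
      u ≠ v ∧ (G.Adj u v ∨ ∃ s : Finset V, u ∈ s ∧ v ∈ s ∧ (G ⊔ edge u v).IsNClique r s) := by
  have hrel : ∀ x y : V, (G.Adj x y ∨ ∃ s : Finset V, x ∈ s ∧ y ∈ s ∧ s.card = r ∧
      ∀ a ∈ s, ∀ b ∈ s, a ≠ b → ¬(a = x ∧ b = y) → ¬(a = y ∧ b = x) → G.Adj a b) ↔
      (G.Adj x y ∨ ∃ s : Finset V, x ∈ s ∧ y ∈ s ∧ (G ⊔ edge x y).IsNClique r s) := by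
    intro x y
    simp only [isNClique_iff, isClique_sup_edge_iff]
    grind
  rw [krStep, fromRel_adj, hrel, hrel, edge_comm, G.adj_comm]
  grind

theorem le_krStep (r : ℕ) (G : SimpleGraph V) : G ≤ krStep r G :=
  fun _ _ h => krStep_adj.2 ⟨h.ne, Or.inl h⟩

end KrStep

section Cone

variable {n : ℕ} {G H : SimpleGraph (Fin n)}

theorem cone_adj_castSucc {a b : Fin n} : (cone G).Adj a.castSucc b.castSucc ↔ G.Adj a b := by
  simp [cone, fromRel_adj, G.adj_comm b a]
  grind [Adj.ne]

theorem cone_adj_last {w : Fin (n + 1)} : (cone G).Adj (Fin.last n) w ↔ w ≠ Fin.last n := by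
  simp [cone, fromRel_adj, eq_comm]

theorem cone_injective : Function.Injective (cone (n := n)) := fun G H h => by
  ext a b
  rw [← cone_adj_castSucc, h, cone_adj_castSucc]

theorem eq_cone_of_adj {G' : SimpleGraph (Fin (n + 1))}
    (hlast : ∀ w, w ≠ Fin.last n → G'.Adj (Fin.last n) w)
    (hcastSucc : ∀ a b, G'.Adj a.castSucc b.castSucc ↔ G.Adj a b) : G' = cone G := by
  ext u w
  induction u using Fin.lastCases <;> induction w using Fin.lastCases
  · simp
  · simp [hlast, cone_adj_last]
  · simp [G'.adj_comm _ (Fin.last n), (cone G).adj_comm _ (Fin.last n), hlast, cone_adj_last]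
  · rw [hcastSucc, cone_adj_castSucc]

theorem cone_sup_edge (a b : Fin n) :
    cone G ⊔ edge a.castSucc b.castSucc = cone (G ⊔ edge a b) :=
  eq_cone_of_adj (fun _ hw => Or.inl (cone_adj_last.2 hw)) fun _ _ => by
    simp [cone_adj_castSucc, edge_adj]

theorem isClique_cone_map_iff {t : Finset (Fin n)} :
    (cone H).IsClique (t.map Fin.castSuccEmb : Set (Fin (n + 1))) ↔
      H.IsClique (t : Set (Fin n)) := by
  simp [IsClique, Set.Pairwise, cone_adj_castSucc]

theorem isClique_cone_insert_last_iff {t : Finset (Fin n)} :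
    (cone H).IsClique (↑(insert (Fin.last n) (t.map Fin.castSuccEmb)) : Set (Fin (n + 1))) ↔
      H.IsClique (t : Set (Fin n)) := by
  rw [coe_insert, isClique_insert, isClique_cone_map_iff, and_iff_left_iff_imp]
  exact fun _ w _ hw => cone_adj_last.2 hw.symm

theorem exists_isNClique_cone_iff {s : Finset (Fin n)} {k : ℕ} (hs : #s ≤ k) :
    (∃ S, s.map Fin.castSuccEmb ⊆ S ∧ (cone H).IsNClique (k + 1) S) ↔
      ∃ t, s ⊆ t ∧ H.IsNClique k t := by
  constructor
  · rintro ⟨S, hsS, hS⟩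
    set t := S.preimage Fin.castSucc (Fin.castSucc_injective n).injOn
    have hSt : S ⊆ insert (Fin.last n) (t.map Fin.castSuccEmb) := by
      intro x hx
      rcases Fin.eq_castSucc_or_eq_last x with ⟨a, rfl⟩ | rfl <;> simp [t, hx]
    have ht : H.IsClique (t : Set (Fin n)) :=
      isClique_cone_map_iff.1 (hS.isClique.subset (by simp [t]))
    have hkt : k ≤ #t := by
      have := (card_le_card hSt).trans (card_insert_le _ _)
      rw [hS.card_eq, card_map] at this
      omega
    have hst : s ⊆ t := by simpa [t, subset_iff] using hsS
    obtain ⟨u, hsu, hut, hu⟩ := exists_subsuperset_card_eq hst hs hkt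
    exact ⟨u, hsu, ht.subset (by simpa using hut), hu⟩
  · rintro ⟨t, hst, ht⟩
    refine ⟨_, (map_subset_map.2 hst).trans (subset_insert _ _),
      isClique_cone_insert_last_iff.2 ht.isClique, ?_⟩
    rw [card_insert_of_notMem (by simp), card_map, ht.card_eq]

theorem krStep_cone {r : ℕ} (hr : 2 ≤ r) (G : SimpleGraph (Fin n)) :
    krStep (r + 1) (cone G) = cone (krStep r G) := by
  refine eq_cone_of_adj (fun w hw => le_krStep _ _ (cone_adj_last.2 hw)) fun a b => ?_
  have hcliques := exists_isNClique_cone_iff (H := G ⊔ edge a b) (s := {a, b})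
    (card_le_two.trans hr)
  simp only [map_insert, map_singleton, Fin.castSuccEmb_apply, insert_subset_iff,
    singleton_subset_iff, and_assoc] at hcliques
  rw [krStep_adj, krStep_adj, cone_adj_castSucc, cone_sup_edge, hcliques, Ne, Fin.castSucc_inj]

theorem iterate_krStep_cone {r : ℕ} (hr : 2 ≤ r) (G : SimpleGraph (Fin n)) (t : ℕ) :
    (krStep (r + 1))^[t] (cone G) = cone ((krStep r)^[t] G) :=
  (Function.Semiconj.iterate_right (fun G => (krStep_cone hr G).symm) t G).symm

end Cone

theorem stmt_5_general (n r : ℕ) (hr : 3 ≤ r) :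
    (∀ (G₀ : SimpleGraph (Fin n)) (t : ℕ),
        (krStep (r + 1))^[t] (cone G₀) = cone ((krStep r)^[t] G₀)) ∧
    maxRunTime r n ≤ maxRunTime (r + 1) (n + 1) := by
  have hcone := iterate_krStep_cone (n := n) (by omega : 2 ≤ r)
  refine ⟨hcone, csSup_le_csSup' (bddAbove_setOf_iterate_ne fun G => le_krStep _ G) ?_⟩
  rintro t ⟨G₀, hG₀⟩
  exact ⟨cone G₀, by rw [hcone, hcone]; exact cone_injective.ne hG₀⟩

theorem stmt_5 (n r : ℕ) (hn : 1 ≤ n) (hr : 3 ≤ r) :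
    (∀ (G₀ : SimpleGraph (Fin n)) (t : ℕ),
        (krStep (r + 1))^[t] (cone G₀) = cone ((krStep r)^[t] G₀)) ∧
    maxRunTime r n ≤ maxRunTime (r + 1) (n + 1) :=
  stmt_5_general n r hr
end

section
/- Every chain is induced K₅^−-free: if C is the 5-uniform chain hypergraph on vertices w₁ < w₂ < … < w_{3m+2} with edges e_i = {w_{3i−2}, …, w_{3i+2}}, and K is any copy of K₅ minus an edge in the 2-skeleton of C, then the vertex set of K is contained in some edge e_i of C. -/
theorem stmt_9 {V : Type*} [DecidableEq V] (m : ℕ) (w : ℕ → V)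
    (hw : Function.Injective w) (e : ℕ → Finset V)
    (he : ∀ i, 1 ≤ i → i ≤ m →
      e i = {w (3 * i - 2), w (3 * i - 1), w (3 * i), w (3 * i + 1), w (3 * i + 2)})
    (G : SimpleGraph V)
    (hG : G = SimpleGraph.fromRel (fun u v => ∃ i, 1 ≤ i ∧ i ≤ m ∧ u ∈ e i ∧ v ∈ e i))
    -- `s` spans a copy of `K₅` minus (possibly) the edge `ab` in the 2-skeleton `G`
    (s : Finset V) (hs : s.card = 5) (a b : V) (ha : a ∈ s) (hb : b ∈ s) (hab : a ≠ b)
    (hadj : ∀ u ∈ s, ∀ v ∈ s, u ≠ v → ¬(u = a ∧ v = b) → ¬(u = b ∧ v = a) → G.Adj u v) :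
    ∃ i, 1 ≤ i ∧ i ≤ m ∧ s ⊆ e i := by
  classical
  set f := Function.invFun w with hf
  have hfw : ∀ j, f (w j) = j := fun j => Function.leftInverse_invFun hw j
  -- membership characterization of e i
  have hmemE : ∀ i, 1 ≤ i → i ≤ m → ∀ u, u ∈ e i ↔
      ∃ j, 3 * i - 2 ≤ j ∧ j ≤ 3 * i + 2 ∧ u = w j := by
    intro i h1 h2 u
    rw [he i h1 h2]
    simp only [Finset.mem_insert, Finset.mem_singleton]
    constructor
    · rintro (rfl | rfl | rfl | rfl | rfl)
      · exact ⟨3 * i - 2, le_refl _, by omega, rfl⟩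
      · exact ⟨3 * i - 1, by omega, by omega, rfl⟩
      · exact ⟨3 * i, by omega, by omega, rfl⟩
      · exact ⟨3 * i + 1, by omega, by omega, rfl⟩
      · exact ⟨3 * i + 2, by omega, by omega, rfl⟩
    · rintro ⟨j, hj1, hj2, rfl⟩
      have : j = 3 * i - 2 ∨ j = 3 * i - 1 ∨ j = 3 * i ∨ j = 3 * i + 1 ∨ j = 3 * i + 2 := by
        omega
      rcases this with rfl | rfl | rfl | rfl | rfl <;> tauto
  -- adjacency characterization
  have hadj' : ∀ u ∈ s, ∀ v ∈ s, u ≠ v → ¬(u = a ∧ v = b) → ¬(u = b ∧ v = a) →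
      ∃ i, 1 ≤ i ∧ i ≤ m ∧ u ∈ e i ∧ v ∈ e i := by
    intro u hu v hv huv h1 h2
    have h := hadj u hu v hv huv h1 h2
    rw [hG, SimpleGraph.fromRel_adj] at h
    rcases h with ⟨-, h | h⟩
    · exact h
    · obtain ⟨i, h1, h2, h3, h4⟩ := h; exact ⟨i, h1, h2, h4, h3⟩
  -- index form of adjacency
  have hwin : ∀ u ∈ s, ∀ v ∈ s, u ≠ v → ¬(u = a ∧ v = b) → ¬(u = b ∧ v = a) →
      ∃ i, 1 ≤ i ∧ i ≤ m ∧ 3 * i - 2 ≤ f u ∧ f u ≤ 3 * i + 2 ∧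
        3 * i - 2 ≤ f v ∧ f v ≤ 3 * i + 2 ∧ w (f u) = u ∧ w (f v) = v := by
    intro u hu v hv huv h1 h2
    obtain ⟨i, hi1, hi2, hui, hvi⟩ := hadj' u hu v hv huv h1 h2
    obtain ⟨j, hj1, hj2, rfl⟩ := (hmemE i hi1 hi2 u).mp hui
    obtain ⟨k, hk1, hk2, rfl⟩ := (hmemE i hi1 hi2 v).mp hvi
    exact ⟨i, hi1, hi2, by rw [hfw]; exact hj1, by rw [hfw]; exact hj2,
      by rw [hfw]; exact hk1, by rw [hfw]; exact hk2, by rw [hfw], by rw [hfw]⟩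
  -- every element of s is in the range of w
  have hws : ∀ u ∈ s, w (f u) = u := by
    intro u hu
    have hne : (s \ {u, a, b}).Nonempty := by
      rw [← Finset.card_pos]
      have h1 := Finset.le_card_sdiff ({u, a, b} : Finset V) s
      have h2 : ({u, a, b} : Finset V).card ≤ 3 := by
        apply le_trans (Finset.card_insert_le _ _)
        simp [Finset.card_insert_le]
        have := Finset.card_insert_le a ({b} : Finset V)
        simp at this ⊢
        omega
      omega
    obtain ⟨v, hv⟩ := hne
    rw [Finset.mem_sdiff] at hv
    obtain ⟨hvs, hv2⟩ := hv
    simp only [Finset.mem_insert, Finset.mem_singleton, not_or] at hv2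
    obtain ⟨hvu, hva, hvb⟩ := hv2
    obtain ⟨i, _, _, _, _, _, _, h, -⟩ :=
      hwin u hu v hvs (Ne.symm hvu) (fun h' => hvb h'.2) (fun h' => hva h'.2)
    exact h
  -- the index set
  set t : Finset ℕ := s.image f with ht
  have htcard : t.card = 5 := by
    rw [ht, Finset.card_image_of_injOn, hs]
    intro x hx y hy hxy
    rw [← hws x hx, ← hws y hy, hxy]
  have htmem : ∀ u ∈ s, f u ∈ t := fun u hu => Finset.mem_image_of_mem f hu
  have htne : t.Nonempty := by rw [← Finset.card_pos, htcard]; omega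
  set j1 := t.min' htne with hj1
  set j5 := t.max' htne with hj5
  have hj1t : j1 ∈ t := t.min'_mem htne
  have hj5t : j5 ∈ t := t.max'_mem htne
  have hbound : ∀ k ∈ t, j1 ≤ k ∧ k ≤ j5 := fun k hk =>
    ⟨t.min'_le k hk, t.le_max' k hk⟩
  have hj15 : j1 < j5 := t.min'_lt_max'_of_card (by omega)
  -- retract from t to s
  have hts : ∀ k ∈ t, w k ∈ s ∧ f (w k) = k := by
    intro k hk
    rw [ht] at hk
    obtain ⟨u, hu, rfl⟩ := Finset.mem_image.mp hk
    rw [hws u hu]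
    exact ⟨hu, rfl⟩
  -- helper: a window containing j1 and j5 covers everything
  have hcover : ∀ i, 1 ≤ i → i ≤ m → 3 * i - 2 ≤ j1 → j5 ≤ 3 * i + 2 →
      ∃ i', 1 ≤ i' ∧ i' ≤ m ∧ s ⊆ e i' := by
    intro i hi1 hi2 hlo hhi
    refine ⟨i, hi1, hi2, fun u hu => ?_⟩
    rw [hmemE i hi1 hi2 u]
    obtain ⟨hk1, hk2⟩ := hbound (f u) (htmem u hu)
    exact ⟨f u, by omega, by omega, (hws u hu).symm⟩
  by_cases hcase : (w j1 = a ∧ w j5 = b) ∨ (w j1 = b ∧ w j5 = a)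
  · -- exceptional pair is the extreme pair
    set t1 := t.erase j1 with ht1
    set t2 := t.erase j5 with ht2
    have ht1card : t1.card = 4 := by rw [ht1, Finset.card_erase_of_mem hj1t, htcard]
    have ht2card : t2.card = 4 := by rw [ht2, Finset.card_erase_of_mem hj5t, htcard]
    have ht1ne : t1.Nonempty := by rw [← Finset.card_pos, ht1card]; omega
    have ht2ne : t2.Nonempty := by rw [← Finset.card_pos, ht2card]; omega
    set j2 := t1.min' ht1ne with hj2
    set j4 := t2.max' ht2ne with hj4
    have hj2t : j2 ∈ t := Finset.mem_of_mem_erase (t1.min'_mem ht1ne)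
    have hj4t : j4 ∈ t := Finset.mem_of_mem_erase (t2.max'_mem ht2ne)
    have hj2ne : j2 ≠ j1 := Finset.ne_of_mem_erase (t1.min'_mem ht1ne)
    have hj4ne : j4 ≠ j5 := Finset.ne_of_mem_erase (t2.max'_mem ht2ne)
    have hj2lt5 : j2 < j5 := by
      have h5t1 : j5 ∈ t1 := Finset.mem_erase_of_ne_of_mem (by omega) hj5t
      have := t1.min'_lt_max'_of_card (by omega : 1 < t1.card)
      have hle : j5 ≤ t1.max' ht1ne := by
        have := Finset.le_max' t1 j5 h5t1
        exact this
      have hmax : t1.max' ht1ne ≤ j5 := (hbound _ (Finset.mem_of_mem_erase (t1.max'_mem ht1ne))).2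
      omega
    have hj1lt4 : j1 < j4 := by
      have h1t2 : j1 ∈ t2 := Finset.mem_erase_of_ne_of_mem (by omega) hj1t
      have := t2.min'_lt_max'_of_card (by omega : 1 < t2.card)
      have hle : t2.min' ht2ne ≤ j1 := Finset.min'_le t2 j1 h1t2
      have hmin : j1 ≤ t2.min' ht2ne := (hbound _ (Finset.mem_of_mem_erase (t2.min'_mem ht2ne))).1
      omega
    -- vertices
    obtain ⟨hw1s, hfw1⟩ := hts j1 hj1t
    obtain ⟨hw2s, hfw2⟩ := hts j2 hj2t
    obtain ⟨hw4s, hfw4⟩ := hts j4 hj4t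
    obtain ⟨hw5s, hfw5⟩ := hts j5 hj5t
    -- w j4 ∉ {a, b}, w j2 ∉ {a, b}
    have h4ab : w j4 ≠ a ∧ w j4 ≠ b := by
      rcases hcase with ⟨ha', hb'⟩ | ⟨hb', ha'⟩ <;>
        exact ⟨fun h => by have := hw (h.trans ha'.symm); omega,
               fun h => by have := hw (h.trans hb'.symm); omega⟩
    have h2ab : w j2 ≠ a ∧ w j2 ≠ b := by
      rcases hcase with ⟨ha', hb'⟩ | ⟨hb', ha'⟩ <;>
        exact ⟨fun h => by have := hw (h.trans ha'.symm); omega,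
               fun h => by have := hw (h.trans hb'.symm); omega⟩
    -- window i containing j1 and j4
    obtain ⟨i, hi1, hi2, hA, hB, hC, hD, -, -⟩ :=
      hwin (w j1) hw1s (w j4) hw4s (fun h => by have := hw h; omega)
        (fun h => h4ab.2 h.2) (fun h => h4ab.1 h.2)
    rw [hfw1] at hA hB; rw [hfw4] at hC hD
    -- window i' containing j2 and j5
    obtain ⟨i', hi'1, hi'2, hE, hF, hG', hH, -, -⟩ :=
      hwin (w j2) hw2s (w j5) hw5s (fun h => by have := hw h; omega)
        (fun h => h2ab.1 h.1) (fun h => h2ab.2 h.1)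
    rw [hfw2] at hE hF; rw [hfw5] at hG' hH
    by_cases hle : j5 ≤ 3 * i + 2
    · exact hcover i hi1 hi2 hA hle
    · exfalso
      -- j2 ≥ 3i+1, j4 ≤ 3i+2, middle three elements squeezed
      have hmid : (t.erase j1).erase j5 ⊆ Finset.Icc (3 * i + 1) (3 * i + 2) := by
        intro k hk
        have hk5 : k ≠ j5 := Finset.ne_of_mem_erase hk
        have hkt1 : k ∈ t1 := Finset.mem_of_mem_erase hk
        have hk2 : j2 ≤ k := Finset.min'_le t1 k hkt1
        have hkt2 : k ∈ t2 := Finset.mem_erase_of_ne_of_mem hk5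
          (Finset.mem_of_mem_erase hkt1)
        have hk4 : k ≤ j4 := Finset.le_max' t2 k hkt2
        rw [Finset.mem_Icc]
        omega
      have hcard1 : ((t.erase j1).erase j5).card = 3 := by
        rw [Finset.card_erase_of_mem (Finset.mem_erase_of_ne_of_mem (by omega) hj5t),
          Finset.card_erase_of_mem hj1t, htcard]
      have hcard2 := Finset.card_le_card hmid
      rw [hcard1, Nat.card_Icc] at hcard2
      omega
  · -- the extreme pair is adjacent
    push_neg at hcase
    obtain ⟨hw1s, -⟩ := hts j1 hj1t
    obtain ⟨hw5s, -⟩ := hts j5 hj5t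
    obtain ⟨i, hi1, hi2, hA, hB, hC, hD, -, -⟩ :=
      hwin (w j1) hw1s (w j5) hw5s (fun h => by have := hw h; omega)
        (fun h => (hcase.1 h.1) h.2) (fun h => (hcase.2 h.1) h.2)
    obtain ⟨-, hfw1⟩ := hts j1 hj1t
    obtain ⟨-, hfw5⟩ := hts j5 hj5t
    rw [hfw1] at hA hB; rw [hfw5] at hC hD
    exact hcover i hi1 hi2 hA hD
end

section
/- For the hypergraph H(n) with n ≥ 10: if 0 ≤ t ≠ t' ≤ m − 1, then |e_t ∩ e_{t'}| ≤ 3; more specifically, |e_t ∩ e_{t'} ∩ (X ∪ Y)| equals 3 if t ≡ t' (mod n), equals 1 if t ≡ t' ± 1 (mod n), and equals 0 otherwise; likewise |e_t ∩ e_{t'} ∩ (Z ∪ W)| equals 3 if t ≡ t' (mod ℓ), equals 1 if t ≡ t' ± 1 (mod ℓ), and equals 0 otherwise; and a total intersection of size 4 or 5 cannot occur for t ≠ t'. -/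
private lemma aux_ne {n : ℕ} (hn : 2 ≤ n) (t : ℕ) : t % n ≠ (t+1) % n := by
  intro h
  have h2 : (n:ℤ) ∣ ((t:ℤ)+1) - t := by
    have := Nat.modEq_iff_dvd.mp (h : Nat.ModEq n t (t+1))
    push_cast at this ⊢; exact this
  simp at h2
  have := Int.le_of_dvd one_pos h2
  omega

private lemma aux_iff (n t t' : ℕ) : t % n = t' % n ↔ (t+1) % n = (t'+1) % n := by
  constructor
  · exact fun h => Nat.ModEq.add_right 1 h
  · exact fun h => Nat.ModEq.add_right_cancel' 1 h

private lemma aux_no {n : ℕ} (hn : 3 ≤ n) (t t' : ℕ) :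
    ¬((t+1)%n = t'%n ∧ (t'+1)%n = t%n) := by
  rintro ⟨h1, h2⟩
  have h3 : Nat.ModEq n (t+2) t :=
    (Nat.ModEq.add_right 1 (show Nat.ModEq n (t+1) t' from h1)).trans h2
  have h4 := Nat.modEq_iff_dvd.mp h3
  push_cast at h4
  have h5 : (n:ℤ) ∣ 2 := by
    have : ((t:ℤ) - (t+2)) = -2 := by ring
    rw [this] at h4
    exact (Int.dvd_neg).mp h4
  have := Int.le_of_dvd two_pos h5
  omega

private lemma aux_tri02 (a a1 b b1 : ℕ) (ha : a ≠ a1) (hb : b ≠ b1)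
    (hiff : a = b ↔ a1 = b1) (hno : ¬(a1 = b ∧ b1 = a)) :
    (({(a,(0:Fin 4)), (a1,0), (a1,2)} : Finset (ℕ × Fin 4)) ∩ {(b,0),(b1,0),(b1,2)}).card
      = if a = b then 3 else if a1 = b ∨ b1 = a then 1 else 0 := by
  by_cases h1 : a = b
  · have h2 : a1 = b1 := hiff.mp h1
    subst h1; subst h2
    rw [if_pos rfl, Finset.inter_self]
    rw [Finset.card_insert_of_notMem (by simp [ha]), Finset.card_insert_of_notMem (by simp),
      Finset.card_singleton]
  · rw [if_neg h1]
    by_cases h2 : a1 = b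
    · have h3 : b1 ≠ a := fun h => hno ⟨h2, h⟩
      rw [if_pos (Or.inl h2)]
      have : (({(a,(0:Fin 4)), (a1,0), (a1,2)} : Finset (ℕ × Fin 4)) ∩ {(b,0),(b1,0),(b1,2)}) = {(a1,0)} := by
        ext ⟨u,v⟩
        fin_cases v <;> simp [Prod.ext_iff] <;> omega
      rw [this, Finset.card_singleton]
    · by_cases h3 : b1 = a
      · rw [if_pos (Or.inr h3)]
        have : (({(a,(0:Fin 4)), (a1,0), (a1,2)} : Finset (ℕ × Fin 4)) ∩ {(b,0),(b1,0),(b1,2)}) = {(a,0)} := by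
          ext ⟨u,v⟩
          fin_cases v <;> simp [Prod.ext_iff] <;> omega
        rw [this, Finset.card_singleton]
      · rw [if_neg (by tauto)]
        have h4 : a1 ≠ b1 := fun h => h1 (hiff.mpr h)
        have : (({(a,(0:Fin 4)), (a1,0), (a1,2)} : Finset (ℕ × Fin 4)) ∩ {(b,0),(b1,0),(b1,2)}) = ∅ := by
          ext ⟨u,v⟩
          fin_cases v <;> simp [Prod.ext_iff] <;> omega
        rw [this, Finset.card_empty]

private lemma aux_tri13 (a a1 b b1 : ℕ) (ha : a ≠ a1) (hb : b ≠ b1)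
    (hiff : a = b ↔ a1 = b1) (hno : ¬(a1 = b ∧ b1 = a)) :
    (({(a,(1:Fin 4)), (a1,1), (a1,3)} : Finset (ℕ × Fin 4)) ∩ {(b,1),(b1,1),(b1,3)}).card
      = if a = b then 3 else if a1 = b ∨ b1 = a then 1 else 0 := by
  by_cases h1 : a = b
  · have h2 : a1 = b1 := hiff.mp h1
    subst h1; subst h2
    rw [if_pos rfl, Finset.inter_self]
    rw [Finset.card_insert_of_notMem (by simp [ha]), Finset.card_insert_of_notMem (by simp),
      Finset.card_singleton]
  · rw [if_neg h1]
    by_cases h2 : a1 = b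
    · have h3 : b1 ≠ a := fun h => hno ⟨h2, h⟩
      rw [if_pos (Or.inl h2)]
      have : (({(a,(1:Fin 4)), (a1,1), (a1,3)} : Finset (ℕ × Fin 4)) ∩ {(b,1),(b1,1),(b1,3)}) = {(a1,1)} := by
        ext ⟨u,v⟩
        fin_cases v <;> simp [Prod.ext_iff] <;> omega
      rw [this, Finset.card_singleton]
    · by_cases h3 : b1 = a
      · rw [if_pos (Or.inr h3)]
        have : (({(a,(1:Fin 4)), (a1,1), (a1,3)} : Finset (ℕ × Fin 4)) ∩ {(b,1),(b1,1),(b1,3)}) = {(a,1)} := by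
          ext ⟨u,v⟩
          fin_cases v <;> simp [Prod.ext_iff] <;> omega
        rw [this, Finset.card_singleton]
      · rw [if_neg (by tauto)]
        have h4 : a1 ≠ b1 := fun h => h1 (hiff.mpr h)
        have : (({(a,(1:Fin 4)), (a1,1), (a1,3)} : Finset (ℕ × Fin 4)) ∩ {(b,1),(b1,1),(b1,3)}) = ∅ := by
          ext ⟨u,v⟩
          fin_cases v <;> simp [Prod.ext_iff] <;> omega
        rw [this, Finset.card_empty]

private lemma aux_split (s : Finset (ℕ × Fin 4)) :
    s.card = (s.filter (fun p => p.2 = 0 ∨ p.2 = 2)).card +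
      (s.filter (fun p => p.2 = 1 ∨ p.2 = 3)).card := by
  rw [← Finset.card_filter_add_card_filter_not (p := fun p => p.2 = 0 ∨ p.2 = 2)]
  congr 1
  congr 1
  apply Finset.filter_congr
  rintro ⟨u,v⟩ _
  fin_cases v <;> simp

private lemma auxA (n D : ℤ) (hn : 10 ≤ n) (h1 : n ∣ D) (h2 : (n+20) ∣ D) (hD : D ≠ 0)
    (hDm : 100 * |D| < n^2) : False := by
  obtain ⟨a, ha⟩ := h1
  obtain ⟨b, hb⟩ := h2
  have hb0 : b ≠ 0 := by rintro rfl; simp at hb; exact hD hb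
  have key : n * (a - b) = 20 * b := by linear_combination hb - ha
  have hab : a ≠ b := by rintro rfl; simp at key; omega
  have h5 : n ≤ 20 * |b| := by
    calc n = n * 1 := by ring
    _ ≤ n * |a - b| := by
        apply mul_le_mul_of_nonneg_left _ (by omega)
        have := abs_pos.mpr (sub_ne_zero.mpr hab)
        omega
    _ = |n * (a-b)| := by rw [abs_mul, abs_of_nonneg (by omega : (0:ℤ) ≤ n)]
    _ = 20 * |b| := by rw [key, abs_mul]; norm_num
  have h6 : |D| = (n+20) * |b| := by rw [hb, abs_mul, abs_of_nonneg (by omega : (0:ℤ) ≤ n+20)]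
  nlinarith [abs_nonneg b, abs_nonneg D]

private lemma auxB (n D : ℤ) (hn : 10 ≤ n) (h1 : n ∣ D) (h2 : (n+20) ∣ (D-1) ∨ (n+20) ∣ (D+1))
    (hDm : 100 * |D| < n^2) : False := by
  obtain ⟨a, ha⟩ := h1
  have key : ∃ ε : ℤ, (ε = 1 ∨ ε = -1) ∧ (n+20) ∣ (20*a + ε) := by
    rcases h2 with h2 | h2
    · exact ⟨1, Or.inl rfl, by
        have : 20*a + 1 = -(D - 1) + (n+20)*a := by rw [ha]; ring
        rw [this]; exact dvd_add (dvd_neg.mpr h2) ⟨a, rfl⟩⟩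
    · exact ⟨-1, Or.inr rfl, by
        have : 20*a + -1 = -(D + 1) + (n+20)*a := by rw [ha]; ring
        rw [this]; exact dvd_add (dvd_neg.mpr h2) ⟨a, rfl⟩⟩
  obtain ⟨ε, hε, hd⟩ := key
  have hne : 20*a + ε ≠ 0 := by rcases hε with rfl | rfl <;> omega
  have h5 : n + 20 ≤ |20*a + ε| := by
    have := Int.le_of_dvd (abs_pos.mpr hne) ((dvd_abs _ _).mpr hd)
    omega
  have h6 : n + 19 ≤ 20 * |a| := by
    have : |20*a + ε| ≤ 20 * |a| + 1 := by
      calc |20*a + ε| ≤ |20*a| + |ε| := abs_add_le _ _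
      _ ≤ 20 * |a| + 1 := by rw [abs_mul]; rcases hε with rfl | rfl <;> simp
    omega
  have h7 : |D| = n * |a| := by rw [ha, abs_mul, abs_of_nonneg (by omega : (0:ℤ) ≤ n)]
  nlinarith [abs_nonneg a]

private lemma auxC (n D : ℤ) (hn : 10 ≤ n) (h1 : (n+20) ∣ D) (h2 : n ∣ (D-1) ∨ n ∣ (D+1))
    (hDm : 100 * |D| < n^2) : False := by
  obtain ⟨b, hb⟩ := h1
  have key : ∃ ε : ℤ, (ε = 1 ∨ ε = -1) ∧ n ∣ (20*b + ε) := by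
    rcases h2 with h2 | h2
    · exact ⟨-1, Or.inr rfl, by
        have : 20*b + -1 = (D - 1) - n*b := by rw [hb]; ring
        rw [this]; exact dvd_sub h2 ⟨b, rfl⟩⟩
    · exact ⟨1, Or.inl rfl, by
        have : 20*b + 1 = (D + 1) - n*b := by rw [hb]; ring
        rw [this]; exact dvd_sub h2 ⟨b, rfl⟩⟩
  obtain ⟨ε, hε, hd⟩ := key
  have hne : 20*b + ε ≠ 0 := by rcases hε with rfl | rfl <;> omega
  have h5 : n ≤ |20*b + ε| := by
    have := Int.le_of_dvd (abs_pos.mpr hne) ((dvd_abs _ _).mpr hd)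
    omega
  have h6 : n - 1 ≤ 20 * |b| := by
    have : |20*b + ε| ≤ 20 * |b| + 1 := by
      calc |20*b + ε| ≤ |20*b| + |ε| := abs_add_le _ _
      _ ≤ 20 * |b| + 1 := by rw [abs_mul]; rcases hε with rfl | rfl <;> simp
    omega
  have h7 : |D| = (n+20) * |b| := by rw [hb, abs_mul, abs_of_nonneg (by omega : (0:ℤ) ≤ n+20)]
  nlinarith [abs_nonneg b]

/- Vertices of `H(n)` are pairs `(index, tag)` with tags `0 = x`, `1 = z`, `2 = y`, `3 = w`;
so `X ∪ Y` consists of the vertices with tag `0` or `2`, and `Z ∪ W` of those with tag `1` or `3`. -/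
theorem stmt_11 (n ℓ m : ℕ) (hn : 10 ≤ n) (hℓ : ℓ = n + 20) (hm : m = n ^ 2 / 100)
    (e : ℕ → Finset (ℕ × Fin 4))
    (he : ∀ t, e t = {(t % n, (0 : Fin 4)), ((t + 1) % n, 0), ((t + 1) % n, 2),
      (t % ℓ, 1), ((t + 1) % ℓ, 1), ((t + 1) % ℓ, 3)}) :
    ∀ t t', t < m → t' < m → t ≠ t' →
      ((e t ∩ e t').filter (fun p => p.2 = 0 ∨ p.2 = 2)).card =
        (if t % n = t' % n then 3
          else if (t + 1) % n = t' % n ∨ (t' + 1) % n = t % n then 1 else 0) ∧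
      ((e t ∩ e t').filter (fun p => p.2 = 1 ∨ p.2 = 3)).card =
        (if t % ℓ = t' % ℓ then 3
          else if (t + 1) % ℓ = t' % ℓ ∨ (t' + 1) % ℓ = t % ℓ then 1 else 0) ∧
      (e t ∩ e t').card ≤ 3 := by
  intro t t' ht ht' hne
  have hℓn : 10 ≤ ℓ := by omega
  have hf02 : ∀ s, (e s).filter (fun p => p.2 = 0 ∨ p.2 = 2) =
      {(s % n, (0:Fin 4)), ((s+1) % n, 0), ((s+1) % n, 2)} := by
    intro s; rw [he]; ext ⟨u,v⟩; fin_cases v <;> simp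
  have hf13 : ∀ s, (e s).filter (fun p => p.2 = 1 ∨ p.2 = 3) =
      {(s % ℓ, (1:Fin 4)), ((s+1) % ℓ, 1), ((s+1) % ℓ, 3)} := by
    intro s; rw [he]; ext ⟨u,v⟩; fin_cases v <;> simp
  have hXY : ((e t ∩ e t').filter (fun p => p.2 = 0 ∨ p.2 = 2)).card =
      (if t % n = t' % n then 3
        else if (t + 1) % n = t' % n ∨ (t' + 1) % n = t % n then 1 else 0) := by
    rw [Finset.filter_inter_distrib, hf02, hf02]
    exact aux_tri02 _ _ _ _ (aux_ne (by omega) t) (aux_ne (by omega) t')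
      (aux_iff n t t') (aux_no (by omega) t t')
  have hZW : ((e t ∩ e t').filter (fun p => p.2 = 1 ∨ p.2 = 3)).card =
      (if t % ℓ = t' % ℓ then 3
        else if (t + 1) % ℓ = t' % ℓ ∨ (t' + 1) % ℓ = t % ℓ then 1 else 0) := by
    rw [Finset.filter_inter_distrib, hf13, hf13]
    exact aux_tri13 _ _ _ _ (aux_ne (by omega) t) (aux_ne (by omega) t')
      (aux_iff ℓ t t') (aux_no (by omega) t t')
  refine ⟨hXY, hZW, ?_⟩
  -- arithmetic setup
  set D : ℤ := (t':ℤ) - t with hD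
  have hD0 : D ≠ 0 := by
    intro h; apply hne; rw [hD] at h; omega
  have hDm : 100 * |D| < (n:ℤ)^2 := by
    have hm1 : 100 * m ≤ n^2 := by rw [hm]; omega
    have h1 : |D| ≤ (m:ℤ) - 1 := by
      rw [abs_le]; constructor <;> · rw [hD]; omega
    have : (100:ℤ) * m ≤ (n:ℤ)^2 := by exact_mod_cast hm1
    have hm0 : 1 ≤ m := by omega
    have : (1:ℤ) ≤ m := by exact_mod_cast hm0
    linarith
  have cvt : ∀ a b : ℕ, a % n = b % n → (n:ℤ) ∣ ((b:ℤ) - a) := fun a b h =>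
    Nat.modEq_iff_dvd.mp h
  have cvtℓ : ∀ a b : ℕ, a % ℓ = b % ℓ → ((n:ℤ)+20) ∣ ((b:ℤ) - a) := by
    intro a b h
    have := Nat.modEq_iff_dvd.mp (h : Nat.ModEq ℓ a b)
    have hc : ((ℓ:ℕ):ℤ) = (n:ℤ) + 20 := by rw [hℓ]; push_cast; ring
    rwa [hc] at this
  rw [aux_split (e t ∩ e t'), hXY, hZW]
  split_ifs with h1 h2 h3 h4 h5 h6 h7 <;> try norm_num
  -- case 3 + 3
  · exact absurd (auxA (n:ℤ) D (by exact_mod_cast hn) (cvt t t' h1) (cvtℓ t t' h2) hD0 hDm) not_false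
  -- case 3 + 1
  · exfalso
    apply auxB (n:ℤ) D (by exact_mod_cast hn) (cvt t t' h1) _ hDm
    rcases h3 with h3 | h3
    · left
      have := cvtℓ (t+1) t' h3
      push_cast at this
      rw [show (t':ℤ) - ((t:ℤ)+1) = D - 1 by rw [hD]; ring] at this
      exact this
    · right
      have := cvtℓ (t'+1) t h3
      push_cast at this
      have e1 : (t:ℤ) - ((t':ℤ)+1) = -(D+1) := by rw [hD]; ring
      rw [e1] at this
      exact dvd_neg.mp this
  -- case 1 + 3
  · exfalso
    apply auxC (n:ℤ) D (by exact_mod_cast hn) (cvtℓ t t' h5) _ hDm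
    rcases h4 with h4 | h4
    · left
      have := cvt (t+1) t' h4
      push_cast at this
      rw [show (t':ℤ) - ((t:ℤ)+1) = D - 1 by rw [hD]; ring] at this
      exact this
    · right
      have := cvt (t'+1) t h4
      push_cast at this
      rw [show (t:ℤ) - ((t':ℤ)+1) = -(D+1) by rw [hD]; ring] at this
      exact dvd_neg.mp this
end

section
/- Subset claim for cliques in the 2-skeleton of H(n): if U ⊆ X ∪ Y induces a clique in the 2-skeleton G of H(n), then |U| ≤ 3 and U ⊆ e_t for some 0 ≤ t ≤ n − 1. (The restriction of G to X ∪ Y is the union of the n triangles {x_t, x_{(t+1) mod n}, y_{(t+1) mod n}}, which are pairwise edge-disjoint, and G[X] is the cycle x₀x₁…x_{n−1}.) -/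
set_option maxHeartbeats 1000000 in
theorem stmt_12 (n ℓ m : ℕ) (hn : 10 ≤ n) (hℓ : ℓ = n + 20) (hm : m = n ^ 2 / 100)
    (e : ℕ → Finset (ℕ × Fin 4))
    (he : ∀ t, e t = {(t % n, (0 : Fin 4)), ((t + 1) % n, 0), ((t + 1) % n, 2),
      (t % ℓ, 1), ((t + 1) % ℓ, 1), ((t + 1) % ℓ, 3)})
    (U : Finset (ℕ × Fin 4))
    (hU : ∀ p ∈ U, (p.2 = 0 ∨ p.2 = 2) ∧ p.1 < n)
    (hclique : ∀ u ∈ U, ∀ v ∈ U, u ≠ v → ∃ t, t < m ∧ u ∈ e t ∧ v ∈ e t) :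
    U.card ≤ 3 ∧ ∃ t, t < n ∧ U ⊆ e t := by
  have hn0 : 0 < n := by omega
  have mem0 : ∀ a t, ((a, (0:Fin 4)) ∈ e t) ↔ (a = t % n ∨ a = (t+1) % n) := by
    intro a t; simp [he, Prod.ext_iff]
  have mem2 : ∀ a t, ((a, (2:Fin 4)) ∈ e t) ↔ a = (t+1) % n := by
    intro a t; simp [he, Prod.ext_iff]
  have e2 : ∀ t, (t % n + 1) % n = (t + 1) % n := by
    intro t
    rw [Nat.add_mod t 1 n, Nat.mod_eq_of_lt (show 1 < n by omega)]
  have memit : ∀ p : ℕ × Fin 4, ∀ t, (p.2 = 0 ∨ p.2 = 2) → p ∈ e t → p ∈ e (t % n) := by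
    rintro ⟨a, tg⟩ t htg h
    rcases htg with rfl | rfl
    · rw [mem0] at h ⊢
      rw [Nat.mod_mod_of_dvd _ dvd_rfl, e2]
      exact h
    · rw [mem2] at h ⊢
      rw [e2]
      exact h
  have link : ∀ t, t % n < n ∧ ((t+1) % n = t % n + 1 ∨ (t % n = n - 1 ∧ (t+1) % n = 0)) := by
    intro t
    refine ⟨Nat.mod_lt _ hn0, ?_⟩
    rw [← e2 t]
    have h1 : t % n < n := Nat.mod_lt _ hn0
    rcases Nat.lt_or_ge (t % n + 1) n with h | h
    · left; rw [Nat.mod_eq_of_lt h]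
    · right
      have : t % n + 1 = n := by omega
      rw [this, Nat.mod_self]
      omega
  -- main claim
  have hmain : ∃ t, t < n ∧ U ⊆ e t := by
    by_cases hsmall : U.card ≤ 1
    · rcases Finset.eq_empty_or_nonempty U with rfl | ⟨p, hp⟩
      · exact ⟨0, hn0, by simp⟩
      · have hone : ∀ q ∈ U, q = p := by
          intro q hq
          by_contra hne
          have := Finset.one_lt_card.mpr ⟨q, hq, p, hp, hne⟩
          omega
        obtain ⟨a, ta⟩ := p
        obtain ⟨hta, han⟩ := hU _ hp
        simp only at hta han
        rcases hta with rfl | rfl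
        · refine ⟨a, han, fun q hq => ?_⟩
          rw [hone q hq, mem0]
          left; rw [Nat.mod_eq_of_lt han]
        · rcases Nat.eq_zero_or_pos a with rfl | hapos
          · refine ⟨n - 1, by omega, fun q hq => ?_⟩
            rw [hone q hq, mem2]
            have : n - 1 + 1 = n := by omega
            rw [this, Nat.mod_self]
          · refine ⟨a - 1, by omega, fun q hq => ?_⟩
            rw [hone q hq, mem2]
            have : a - 1 + 1 = a := by omega
            rw [this, Nat.mod_eq_of_lt han]
    · have h2 : 1 < U.card := by omega
      obtain ⟨u, hu, v, hv, huv⟩ := Finset.one_lt_card.mp h2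
      obtain ⟨t0, _, hut0, hvt0⟩ := hclique u hu v hv huv
      refine ⟨t0 % n, Nat.mod_lt _ hn0, fun w hw => ?_⟩
      have hwtag := (hU w hw).1
      suffices hgoal : w ∈ e t0 by exact memit w t0 hwtag hgoal
      by_cases hwu : w = u
      · rw [hwu]; exact hut0
      by_cases hwv : w = v
      · rw [hwv]; exact hvt0
      obtain ⟨t1, _, hwt1, hut1⟩ := hclique w hw u hu hwu
      obtain ⟨t2, _, hwt2, hvt2⟩ := hclique w hw v hv hwv
      obtain ⟨a, ta⟩ := u
      obtain ⟨b, tb⟩ := v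
      obtain ⟨c, tc⟩ := w
      obtain ⟨hta, han⟩ := hU _ hu
      obtain ⟨htb, hbn⟩ := hU _ hv
      obtain ⟨htc, hcn⟩ := hU _ hw
      simp only at hta htb htc han hbn hcn
      have L0 := link t0
      have L1 := link t1
      have L2 := link t2
      rcases hta with rfl | rfl <;> rcases htb with rfl | rfl <;> rcases htc with rfl | rfl <;>
        simp only [mem0, mem2] at hut0 hvt0 hwt1 hut1 hwt2 hvt2 ⊢ <;>
        simp at huv hwu hwv <;>
        omega
  obtain ⟨t, htn, hsub⟩ := hmain
  refine ⟨?_, t, htn, hsub⟩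
  have hsub3 : U ⊆ ({(t % n, (0:Fin 4)), ((t+1) % n, 0), ((t+1) % n, 2)} : Finset (ℕ × Fin 4)) := by
    intro p hp
    obtain ⟨a, ta⟩ := p
    obtain ⟨hta, _⟩ := hU _ hp
    have hpe := hsub hp
    simp only at hta
    rcases hta with rfl | rfl
    · rw [mem0] at hpe
      simp only [Finset.mem_insert, Finset.mem_singleton, Prod.mk.injEq]
      tauto
    · rw [mem2] at hpe
      simp only [Finset.mem_insert, Finset.mem_singleton, Prod.mk.injEq]
      tauto
  calc U.card ≤ _ := Finset.card_le_card hsub3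
    _ ≤ 3 := by
      apply le_trans (Finset.card_insert_le _ _)
      have h1 := Finset.card_insert_le ((t+1) % n, (0:Fin 4)) ({((t+1) % n, (2:Fin 4))} : Finset (ℕ × Fin 4))
      have h2 : ({((t+1) % n, (2:Fin 4))} : Finset (ℕ × Fin 4)).card = 1 := Finset.card_singleton _
      omega
end

section
/- Let B' ⊆ ℕ be 3-AP-free, B = 10·B', and let b_{xy}, b_{yz}, b_{xz} ∈ B and integers i, j, k satisfy |j − i − b_{xy}| ≤ 1, |k − j − b_{yz}| ≤ 1, and |k − i − 2·b_{xz}| ≤ 1. Then b_{xy} = b_{yz} = b_{xz}. -/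
/-- A set of naturals is 3-AP-free if `2b₁ = b₂ + b₃` forces `b₁ = b₂ = b₃`. -/
def ThreeAPFreeSet (S : Set ℕ) : Prop :=
  ∀ b₁ ∈ S, ∀ b₂ ∈ S, ∀ b₃ ∈ S, 2 * b₁ = b₂ + b₃ → b₁ = b₂ ∧ b₁ = b₃

theorem stmt_13 (B' B : Set ℕ) (h3 : ThreeAPFreeSet B')
    (hB : B = (fun b => 10 * b) '' B')
    (bxy byz bxz : ℕ) (hbxy : bxy ∈ B) (hbyz : byz ∈ B) (hbxz : bxz ∈ B)
    (i j k : ℤ)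
    (h₁ : |j - i - (bxy : ℤ)| ≤ 1) (h₂ : |k - j - (byz : ℤ)| ≤ 1)
    (h₃ : |k - i - 2 * (bxz : ℤ)| ≤ 1) :
    bxy = byz ∧ bxy = bxz := by
  subst hB
  obtain ⟨a, ha, rfl⟩ := hbxy
  obtain ⟨b, hb, rfl⟩ := hbyz
  obtain ⟨c, hc, rfl⟩ := hbxz
  simp only [Nat.cast_mul, Nat.cast_ofNat] at h₁ h₂ h₃
  rw [abs_le] at h₁ h₂ h₃
  have key : 2 * c = a + b := by omega
  obtain ⟨h4, h5⟩ := h3 c hc a ha b hb key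
  refine ⟨?_, ?_⟩ <;> show 10 * _ = 10 * _ <;> omega
end

section
/- Let B' be a 3-AP-free set of positive integers and B = 10·B'. If b, b' ∈ B are distinct, e is a transverse edge of the 2-skeleton of H_b(n), and e' is a transverse edge of the 2-skeleton of H_{b'}(n), then |Length(e) − Length(e')| ≥ 8. In particular, every transverse edge of the 2-skeleton of H_B(n) belongs to the 2-skeleton of H_b(n) for a unique b ∈ B. -/
/- Vertices are pairs `(index, tag)` with tags `0 = x`, `1 = y`, `2 = z`. -/

/-- The hyperedge `E_{i,b} = {x_i, x_{i+1}, y_{i+b}, z_{i+2b}, z_{i+2b+1}}` of `H_b(n)`. -/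
def chainEdge (i b : ℕ) : Finset (ℕ × Fin 3) :=
  {(i, 0), (i + 1, 0), (i + b, 1), (i + 2 * b, 2), (i + 2 * b + 1, 2)}

/-- Adjacency in the 2-skeleton of `H_b(n)`: two distinct vertices lying in a common
hyperedge `E_{i,b}` with `0 ≤ i ≤ n - 2b - 1`. -/
def chainAdj (n b : ℕ) (u v : ℕ × Fin 3) : Prop :=
  u ≠ v ∧ ∃ i, i + 2 * b + 1 ≤ n ∧ u ∈ chainEdge i b ∧ v ∈ chainEdge i b

/-- A transverse pair: an `xy`, `yz` or `xz` pair. -/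
def transverse (u v : ℕ × Fin 3) : Prop :=
  (u.2 = 0 ∧ v.2 = 1) ∨ (u.2 = 1 ∧ v.2 = 2) ∨ (u.2 = 0 ∧ v.2 = 2)

/-- The length of a transverse pair: `|j - i|` for `x_i y_j` and `y_j z_k`,
and `|k - i| / 2` for `x_i z_k`. -/
noncomputable def tLength (u v : ℕ × Fin 3) : ℚ :=
  if u.2 = 0 ∧ v.2 = 2 then |(v.1 : ℚ) - (u.1 : ℚ)| / 2 else |(v.1 : ℚ) - (u.1 : ℚ)|

lemma abs_helper1 (q c : ℚ) (h0 : 0 ≤ c) (h1 : c - 1 ≤ q) (h2 : q ≤ c + 1) :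
    abs (abs q - c) ≤ 1 := by
  rcases abs_cases q with ⟨e, _⟩ | ⟨e, hq⟩ <;> rw [e, abs_le] <;> constructor <;> linarith

lemma abs_helper2 (q c : ℚ) (h0 : 0 ≤ c) (h1 : 2 * c - 2 ≤ q) (h2 : q ≤ 2 * c + 2) :
    abs (abs q / 2 - c) ≤ 1 := by
  rcases abs_cases q with ⟨e, _⟩ | ⟨e, hq⟩ <;> rw [e, abs_le] <;> constructor <;> linarith

lemma len_close (n b : ℕ) (u v : ℕ × Fin 3) (ht : transverse u v)
    (h : chainAdj n b u v) : |tLength u v - b| ≤ 1 := by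
  obtain ⟨hne, i, hi, hu, hv⟩ := h
  have hb0 : (0:ℚ) ≤ b := by positivity
  simp only [chainEdge, Finset.mem_insert, Finset.mem_singleton] at hu hv
  rcases ht with ⟨h1, h2⟩ | ⟨h1, h2⟩ | ⟨h1, h2⟩ <;>
    rcases hu with rfl|rfl|rfl|rfl|rfl <;> rcases hv with rfl|rfl|rfl|rfl|rfl <;>
    first
      | (simp at h1; done)
      | (simp at h2; done)
      | (simp only [tLength]
         rw [if_neg (by simp)]
         refine abs_helper1 _ (b : ℚ) hb0 ?_ ?_ <;> push_cast <;> linarith)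
      | (simp only [tLength]
         rw [if_pos (by exact ⟨by simp, by simp⟩)]
         refine abs_helper2 _ (b : ℚ) hb0 ?_ ?_ <;> push_cast <;> linarith)

theorem stmt_14 (n : ℕ) (B' B : Set ℕ) (h3 : ThreeAPFreeSet B')
    (hpos : ∀ b ∈ B', 0 < b) (hB : B = (fun b => 10 * b) '' B') :
    (∀ b ∈ B, ∀ b' ∈ B, b ≠ b' →
      ∀ u v u' v' : ℕ × Fin 3, transverse u v → transverse u' v' →
        chainAdj n b u v → chainAdj n b' u' v' →
        8 ≤ |tLength u v - tLength u' v'|) ∧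
    (∀ u v : ℕ × Fin 3, transverse u v → (∃ b ∈ B, chainAdj n b u v) →
      ∃! b, b ∈ B ∧ chainAdj n b u v) := by

  have main : ∀ b ∈ B, ∀ b' ∈ B, b ≠ b' →
      ∀ u v u' v' : ℕ × Fin 3, transverse u v → transverse u' v' →
        chainAdj n b u v → chainAdj n b' u' v' →
        8 ≤ |tLength u v - tLength u' v'| := by
    intro b hb b' hb' hne u v u' v' ht ht' ha ha'
    subst hB
    obtain ⟨a, _, rfl⟩ := hb
    obtain ⟨a', _, rfl⟩ := hb'
    have haa : a ≠ a' := fun h => hne (by rw [h])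
    have hgap : 10 ≤ |(10 * a : ℚ) - (10 * a' : ℚ)| := by
      rcases lt_or_gt_of_ne haa with h | h
      · have h1 : a + 1 ≤ a' := h
        have h2 : (a : ℚ) + 1 ≤ (a' : ℚ) := by exact_mod_cast h1
        rw [abs_sub_comm, abs_of_nonneg (by linarith)]; linarith
      · have h1 : a' + 1 ≤ a := h
        have h2 : (a' : ℚ) + 1 ≤ (a : ℚ) := by exact_mod_cast h1
        rw [abs_of_nonneg (by linarith)]; linarith
    have c1 := len_close n (10 * a) u v ht ha
    have c2 := len_close n (10 * a') u' v' ht' ha'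
    rw [abs_le] at c1 c2
    obtain ⟨c1l, c1r⟩ := c1
    obtain ⟨c2l, c2r⟩ := c2
    push_cast at c1l c1r c2l c2r
    rcases abs_cases ((10 * a : ℚ) - (10 * a' : ℚ)) with ⟨e, _⟩ | ⟨e, _⟩ <;>
      rw [e] at hgap <;>
      rcases abs_cases (tLength u v - tLength u' v') with ⟨e2, _⟩ | ⟨e2, _⟩ <;>
      rw [e2] <;> push_cast <;> linarith
  refine ⟨main, ?_⟩
  rintro u v ht ⟨b, hb, hadj⟩
  refine ⟨b, ⟨hb, hadj⟩, ?_⟩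
  rintro b₂ ⟨hb₂, hadj₂⟩
  by_contra hne
  have h8 := main b₂ hb₂ b hb hne u v u v ht ht hadj₂ hadj
  rw [sub_self, abs_zero] at h8
  norm_num at h8
end

section
/- Every triangle in the 2-skeleton G_B of H_B(n), where B = 10B' for a 3-AP-free set B' ⊆ [n], has at least two transverse edges and is entirely contained in G_b for some b ∈ B. -/
/-! ### Auxiliary lemmas -/

lemma mem_cx {a i : ℕ} (b : ℕ) (h : a = i ∨ a = i + 1) :
    ((a, (0:Fin 3))) ∈ chainEdge i b := by
  rcases h with h | h <;> subst h <;> simp [chainEdge]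

lemma mem_cy {a i : ℕ} (b : ℕ) (h : a = i + b) :
    ((a, (1:Fin 3))) ∈ chainEdge i b := by
  subst h; simp [chainEdge]

lemma mem_cz {a i : ℕ} (b : ℕ) (h : a = i + 2 * b ∨ a = i + 2 * b + 1) :
    ((a, (2:Fin 3))) ∈ chainEdge i b := by
  rcases h with h | h <;> subst h <;> simp [chainEdge]

lemma adj_xx {n b a c : ℕ} (h : chainAdj n b (a,0) (c,0)) :
    a ≠ c ∧ (a = c + 1 ∨ c = a + 1) := by
  obtain ⟨hne, i, _, hu, hv⟩ := h
  have hac : a ≠ c := fun h => hne (by rw [h])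
  simp [chainEdge, Prod.ext_iff] at hu hv
  exact ⟨hac, by omega⟩

lemma adj_zz {n b a c : ℕ} (h : chainAdj n b (a,2) (c,2)) :
    a ≠ c ∧ (a = c + 1 ∨ c = a + 1) := by
  obtain ⟨hne, i, _, hu, hv⟩ := h
  have hac : a ≠ c := fun h => hne (by rw [h])
  simp [chainEdge, Prod.ext_iff] at hu hv
  exact ⟨hac, by omega⟩

lemma adj_yy {n b a c : ℕ} (h : chainAdj n b (a,1) (c,1)) : False := by
  obtain ⟨hne, i, _, hu, hv⟩ := h
  have hac : a ≠ c := fun h => hne (by rw [h])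
  simp [chainEdge, Prod.ext_iff] at hu hv
  omega

lemma adj_xy {n b a c : ℕ} (h : chainAdj n b (a,0) (c,1)) :
    ∃ i, i + 2*b + 1 ≤ n ∧ (a = i ∨ a = i + 1) ∧ c = i + b := by
  obtain ⟨-, i, hle, hu, hv⟩ := h
  simp [chainEdge, Prod.ext_iff] at hu hv
  exact ⟨i, hle, by omega, by omega⟩

lemma adj_xz {n b a c : ℕ} (h : chainAdj n b (a,0) (c,2)) :
    ∃ i, i + 2*b + 1 ≤ n ∧ (a = i ∨ a = i + 1) ∧ (c = i + 2*b ∨ c = i + 2*b + 1) := by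
  obtain ⟨-, i, hle, hu, hv⟩ := h
  simp [chainEdge, Prod.ext_iff] at hu hv
  exact ⟨i, hle, by omega, by omega⟩

lemma adj_yz {n b a c : ℕ} (h : chainAdj n b (a,1) (c,2)) :
    ∃ i, i + 2*b + 1 ≤ n ∧ a = i + b ∧ (c = i + 2*b ∨ c = i + 2*b + 1) := by
  obtain ⟨-, i, hle, hu, hv⟩ := h
  simp [chainEdge, Prod.ext_iff] at hu hv
  exact ⟨i, hle, by omega, by omega⟩

lemma adjB_symm {n : ℕ} {B : Set ℕ} {u v : ℕ × Fin 3}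
    (h : ∃ b ∈ B, chainAdj n b u v) : ∃ b ∈ B, chainAdj n b v u := by
  obtain ⟨b, hb, hne, i, hi, h1, h2⟩ := h
  exact ⟨b, hb, hne.symm, i, hi, h2, h1⟩

/-! ### The five genuine triangle shapes -/

section cases
variable {n : ℕ} {B : Set ℕ}

lemma case_xxy (hB : ∀ b ∈ B, 10 ∣ b) {a c e : ℕ}
    (h1 : ∃ b ∈ B, chainAdj n b (a,0) (c,0))
    (h2 : ∃ b ∈ B, chainAdj n b (c,0) (e,1))
    (h3 : ∃ b ∈ B, chainAdj n b (a,0) (e,1)) :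
    ∃ b ∈ B, ∃ i, i + 2*b + 1 ≤ n ∧ ((a,0) : ℕ × Fin 3) ∈ chainEdge i b ∧
      ((c,0) : ℕ × Fin 3) ∈ chainEdge i b ∧ ((e,1) : ℕ × Fin 3) ∈ chainEdge i b := by
  obtain ⟨b1, hb1, hadj1⟩ := h1
  obtain ⟨b2, hb2, hadj2⟩ := h2
  obtain ⟨b3, hb3, hadj3⟩ := h3
  obtain ⟨hne, hd⟩ := adj_xx hadj1
  obtain ⟨i2, hle2, hc2, he2⟩ := adj_xy hadj2
  obtain ⟨i3, hle3, ha3, he3⟩ := adj_xy hadj3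
  have d2 := hB b2 hb2; have d3 := hB b3 hb3
  exact ⟨b2, hb2, i2, hle2, mem_cx _ (by omega), mem_cx _ (by omega), mem_cy _ (by omega)⟩

lemma case_xxz (hB : ∀ b ∈ B, 10 ∣ b) {a c e : ℕ}
    (h1 : ∃ b ∈ B, chainAdj n b (a,0) (c,0))
    (h2 : ∃ b ∈ B, chainAdj n b (c,0) (e,2))
    (h3 : ∃ b ∈ B, chainAdj n b (a,0) (e,2)) :
    ∃ b ∈ B, ∃ i, i + 2*b + 1 ≤ n ∧ ((a,0) : ℕ × Fin 3) ∈ chainEdge i b ∧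
      ((c,0) : ℕ × Fin 3) ∈ chainEdge i b ∧ ((e,2) : ℕ × Fin 3) ∈ chainEdge i b := by
  obtain ⟨b1, hb1, hadj1⟩ := h1
  obtain ⟨b2, hb2, hadj2⟩ := h2
  obtain ⟨b3, hb3, hadj3⟩ := h3
  obtain ⟨hne, hd⟩ := adj_xx hadj1
  obtain ⟨i2, hle2, hc2, he2⟩ := adj_xz hadj2
  obtain ⟨i3, hle3, ha3, he3⟩ := adj_xz hadj3
  have d2 := hB b2 hb2; have d3 := hB b3 hb3
  have hbeq : b2 = b3 := by omega
  rcases hd with h | h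
  · exact ⟨b2, hb2, c, by omega, mem_cx _ (by omega), mem_cx _ (by omega),
      mem_cz _ (by omega)⟩
  · exact ⟨b2, hb2, a, by omega, mem_cx _ (by omega), mem_cx _ (by omega),
      mem_cz _ (by omega)⟩

lemma case_xzz (hB : ∀ b ∈ B, 10 ∣ b) {a c e : ℕ}
    (h1 : ∃ b ∈ B, chainAdj n b (a,0) (c,2))
    (h2 : ∃ b ∈ B, chainAdj n b (c,2) (e,2))
    (h3 : ∃ b ∈ B, chainAdj n b (a,0) (e,2)) :
    ∃ b ∈ B, ∃ i, i + 2*b + 1 ≤ n ∧ ((a,0) : ℕ × Fin 3) ∈ chainEdge i b ∧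
      ((c,2) : ℕ × Fin 3) ∈ chainEdge i b ∧ ((e,2) : ℕ × Fin 3) ∈ chainEdge i b := by
  obtain ⟨b1, hb1, hadj1⟩ := h1
  obtain ⟨b2, hb2, hadj2⟩ := h2
  obtain ⟨b3, hb3, hadj3⟩ := h3
  obtain ⟨i1, hle1, ha1, hc1⟩ := adj_xz hadj1
  obtain ⟨hne, hd⟩ := adj_zz hadj2
  obtain ⟨i3, hle3, ha3, he3⟩ := adj_xz hadj3
  have d1 := hB b1 hb1; have d3 := hB b3 hb3
  have hbeq : b1 = b3 := by omega
  rcases hd with h | h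
  · exact ⟨b1, hb1, e - 2*b1, by omega, mem_cx _ (by omega), mem_cz _ (by omega),
      mem_cz _ (by omega)⟩
  · exact ⟨b1, hb1, c - 2*b1, by omega, mem_cx _ (by omega), mem_cz _ (by omega),
      mem_cz _ (by omega)⟩

lemma case_yzz (hB : ∀ b ∈ B, 10 ∣ b) {a c e : ℕ}
    (h1 : ∃ b ∈ B, chainAdj n b (a,1) (c,2))
    (h2 : ∃ b ∈ B, chainAdj n b (c,2) (e,2))
    (h3 : ∃ b ∈ B, chainAdj n b (a,1) (e,2)) :
    ∃ b ∈ B, ∃ i, i + 2*b + 1 ≤ n ∧ ((a,1) : ℕ × Fin 3) ∈ chainEdge i b ∧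
      ((c,2) : ℕ × Fin 3) ∈ chainEdge i b ∧ ((e,2) : ℕ × Fin 3) ∈ chainEdge i b := by
  obtain ⟨b1, hb1, hadj1⟩ := h1
  obtain ⟨b2, hb2, hadj2⟩ := h2
  obtain ⟨b3, hb3, hadj3⟩ := h3
  obtain ⟨i1, hle1, ha1, hc1⟩ := adj_yz hadj1
  obtain ⟨hne, hd⟩ := adj_zz hadj2
  obtain ⟨i3, hle3, ha3, he3⟩ := adj_yz hadj3
  have d1 := hB b1 hb1; have d3 := hB b3 hb3
  have hbeq : b1 = b3 := by omega
  exact ⟨b1, hb1, i1, hle1, mem_cy _ (by omega), mem_cz _ (by omega), mem_cz _ (by omega)⟩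

lemma case_xyz (hB : ∀ b ∈ B, 10 ∣ b)
    (hAP : ∀ b1 ∈ B, ∀ b2 ∈ B, ∀ b3 ∈ B, 2 * b3 = b1 + b2 → b1 = b3 ∧ b2 = b3)
    {a c e : ℕ}
    (h1 : ∃ b ∈ B, chainAdj n b (a,0) (c,1))
    (h2 : ∃ b ∈ B, chainAdj n b (c,1) (e,2))
    (h3 : ∃ b ∈ B, chainAdj n b (a,0) (e,2)) :
    ∃ b ∈ B, ∃ i, i + 2*b + 1 ≤ n ∧ ((a,0) : ℕ × Fin 3) ∈ chainEdge i b ∧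
      ((c,1) : ℕ × Fin 3) ∈ chainEdge i b ∧ ((e,2) : ℕ × Fin 3) ∈ chainEdge i b := by
  obtain ⟨b1, hb1, hadj1⟩ := h1
  obtain ⟨b2, hb2, hadj2⟩ := h2
  obtain ⟨b3, hb3, hadj3⟩ := h3
  obtain ⟨i1, hle1, ha1, hc1⟩ := adj_xy hadj1
  obtain ⟨i2, hle2, hc2, he2⟩ := adj_yz hadj2
  obtain ⟨i3, hle3, ha3, he3⟩ := adj_xz hadj3
  have d1 := hB b1 hb1; have d2 := hB b2 hb2; have d3 := hB b3 hb3
  have hsum : 2 * b3 = b1 + b2 := by omega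
  obtain ⟨e1, e2⟩ := hAP b1 hb1 b2 hb2 b3 hb3 hsum
  exact ⟨b1, hb1, i1, hle1, mem_cx _ (by omega), mem_cy _ (by omega), mem_cz _ (by omega)⟩

end cases

theorem stmt_16 (n : ℕ) (B' B : Set ℕ) (h3 : ThreeAPFreeSet B')
    (hB' : B' ⊆ Set.Icc 1 n) (hB : B = (fun b => 10 * b) '' B')
    -- `u, v, w` form a triangle in the 2-skeleton `G_B` of `H_B(n)`
    (u v w : ℕ × Fin 3)
    (huv : ∃ b ∈ B, chainAdj n b u v)
    (hvw : ∃ b ∈ B, chainAdj n b v w)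
    (huw : ∃ b ∈ B, chainAdj n b u w) :
    -- at least two of the three edges are transverse ...
    ((u.2 ≠ v.2 ∧ v.2 ≠ w.2) ∨ (u.2 ≠ v.2 ∧ u.2 ≠ w.2) ∨ (v.2 ≠ w.2 ∧ u.2 ≠ w.2)) ∧
    -- ... and the triangle is contained in `G_b` for a single `b ∈ B`
    (∃ b ∈ B, chainAdj n b u v ∧ chainAdj n b v w ∧ chainAdj n b u w) := by
  obtain ⟨a, s⟩ := u
  obtain ⟨c, t⟩ := v
  obtain ⟨e, r⟩ := w
  have hB10 : ∀ b ∈ B, 10 ∣ b := by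
    intro b hb
    rw [hB] at hb
    obtain ⟨x, -, rfl⟩ := hb
    exact ⟨x, rfl⟩
  have hAP : ∀ b1 ∈ B, ∀ b2 ∈ B, ∀ b3 ∈ B, 2 * b3 = b1 + b2 → b1 = b3 ∧ b2 = b3 := by
    intro b1 hb1 b2 hb2 b3 hb3 hsum
    rw [hB] at hb1 hb2 hb3
    obtain ⟨x1, hx1, rfl⟩ := hb1
    obtain ⟨x2, hx2, rfl⟩ := hb2
    obtain ⟨x3, hx3, rfl⟩ := hb3
    have hsum' : 2 * (10 * x3) = 10 * x1 + 10 * x2 := hsum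
    obtain ⟨g1, g2⟩ := h3 x3 hx3 x1 hx1 x2 hx2 (by omega)
    show 10 * x1 = 10 * x3 ∧ 10 * x2 = 10 * x3
    omega
  have hne_uv : a ≠ c ∨ s ≠ t := by
    obtain ⟨b, -, hne, -⟩ := huv
    by_contra hcon
    push_neg at hcon
    exact hne (by rw [hcon.1, hcon.2])
  have hne_vw : c ≠ e ∨ t ≠ r := by
    obtain ⟨b, -, hne, -⟩ := hvw
    by_contra hcon
    push_neg at hcon
    exact hne (by rw [hcon.1, hcon.2])
  have hne_uw : a ≠ e ∨ s ≠ r := by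
    obtain ⟨b, -, hne, -⟩ := huw
    by_contra hcon
    push_neg at hcon
    exact hne (by rw [hcon.1, hcon.2])
  have main : ∃ b ∈ B, ∃ i, i + 2*b + 1 ≤ n ∧ ((a,s) : ℕ × Fin 3) ∈ chainEdge i b ∧
      ((c,t) : ℕ × Fin 3) ∈ chainEdge i b ∧ ((e,r) : ℕ × Fin 3) ∈ chainEdge i b := by
    fin_cases s <;> fin_cases t <;> fin_cases r
    -- (0,0,0)
    · exfalso
      obtain ⟨b1, -, hadj1⟩ := huv
      obtain ⟨b2, -, hadj2⟩ := hvw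
      obtain ⟨b3, -, hadj3⟩ := huw
      obtain ⟨n1, d1⟩ := adj_xx hadj1
      obtain ⟨n2, d2⟩ := adj_xx hadj2
      obtain ⟨n3, d3⟩ := adj_xx hadj3
      omega
    -- (0,0,1)
    · exact case_xxy hB10 huv hvw huw
    -- (0,0,2)
    · exact case_xxz hB10 huv hvw huw
    -- (0,1,0)
    · obtain ⟨b, hb, i, hle, m1, m2, m3⟩ := case_xxy hB10 huw (adjB_symm hvw) huv
      exact ⟨b, hb, i, hle, m1, m3, m2⟩
    -- (0,1,1)
    · exact ((adj_yy hvw.choose_spec.2).elim)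
    -- (0,1,2)
    · exact case_xyz hB10 hAP huv hvw huw
    -- (0,2,0)
    · obtain ⟨b, hb, i, hle, m1, m2, m3⟩ := case_xxz hB10 huw (adjB_symm hvw) huv
      exact ⟨b, hb, i, hle, m1, m3, m2⟩
    -- (0,2,1)
    · obtain ⟨b, hb, i, hle, m1, m2, m3⟩ := case_xyz hB10 hAP huw (adjB_symm hvw) huv
      exact ⟨b, hb, i, hle, m1, m3, m2⟩
    -- (0,2,2)
    · exact case_xzz hB10 huv hvw huw
    -- (1,0,0)
    · obtain ⟨b, hb, i, hle, m1, m2, m3⟩ := case_xxy hB10 hvw (adjB_symm huw) (adjB_symm huv)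
      exact ⟨b, hb, i, hle, m3, m1, m2⟩
    -- (1,0,1)
    · exact ((adj_yy huw.choose_spec.2).elim)
    -- (1,0,2)
    · obtain ⟨b, hb, i, hle, m1, m2, m3⟩ := case_xyz hB10 hAP (adjB_symm huv) huw hvw
      exact ⟨b, hb, i, hle, m2, m1, m3⟩
    -- (1,1,0)
    · exact ((adj_yy huv.choose_spec.2).elim)
    -- (1,1,1)
    · exact ((adj_yy huv.choose_spec.2).elim)
    -- (1,1,2)
    · exact ((adj_yy huv.choose_spec.2).elim)
    -- (1,2,0)
    · obtain ⟨b, hb, i, hle, m1, m2, m3⟩ := case_xyz hB10 hAP (adjB_symm huw) huv (adjB_symm hvw)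
      exact ⟨b, hb, i, hle, m2, m3, m1⟩
    -- (1,2,1)
    · exact ((adj_yy huw.choose_spec.2).elim)
    -- (1,2,2)
    · exact case_yzz hB10 huv hvw huw
    -- (2,0,0)
    · obtain ⟨b, hb, i, hle, m1, m2, m3⟩ := case_xxz hB10 hvw (adjB_symm huw) (adjB_symm huv)
      exact ⟨b, hb, i, hle, m3, m1, m2⟩
    -- (2,0,1)
    · obtain ⟨b, hb, i, hle, m1, m2, m3⟩ := case_xyz hB10 hAP hvw (adjB_symm huw) (adjB_symm huv)
      exact ⟨b, hb, i, hle, m3, m1, m2⟩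
    -- (2,0,2)
    · obtain ⟨b, hb, i, hle, m1, m2, m3⟩ := case_xzz hB10 (adjB_symm huv) huw hvw
      exact ⟨b, hb, i, hle, m2, m1, m3⟩
    -- (2,1,0)
    · obtain ⟨b, hb, i, hle, m1, m2, m3⟩ := case_xyz hB10 hAP (adjB_symm hvw) (adjB_symm huv) (adjB_symm huw)
      exact ⟨b, hb, i, hle, m3, m2, m1⟩
    -- (2,1,1)
    · exact ((adj_yy hvw.choose_spec.2).elim)
    -- (2,1,2)
    · obtain ⟨b, hb, i, hle, m1, m2, m3⟩ := case_yzz hB10 (adjB_symm huv) huw hvw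
      exact ⟨b, hb, i, hle, m2, m1, m3⟩
    -- (2,2,0)
    · obtain ⟨b, hb, i, hle, m1, m2, m3⟩ := case_xzz hB10 (adjB_symm huw) huv (adjB_symm hvw)
      exact ⟨b, hb, i, hle, m2, m3, m1⟩
    -- (2,2,1)
    · obtain ⟨b, hb, i, hle, m1, m2, m3⟩ := case_yzz hB10 (adjB_symm huw) huv (adjB_symm hvw)
      exact ⟨b, hb, i, hle, m2, m3, m1⟩
    -- (2,2,2)
    · exfalso
      obtain ⟨b1, -, hadj1⟩ := huv
      obtain ⟨b2, -, hadj2⟩ := hvw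
      obtain ⟨b3, -, hadj3⟩ := huw
      obtain ⟨n1, d1⟩ := adj_zz hadj1
      obtain ⟨n2, d2⟩ := adj_zz hadj2
      obtain ⟨n3, d3⟩ := adj_zz hadj3
      omega
  obtain ⟨b, hbB, i, hle, hmu, hmv, hmw⟩ := main
  have hnuv : ((a,s) : ℕ × Fin 3) ≠ (c,t) := by
    obtain ⟨b0, -, hne, -⟩ := huv; exact hne
  have hnvw : ((c,t) : ℕ × Fin 3) ≠ (e,r) := by
    obtain ⟨b0, -, hne, -⟩ := hvw; exact hne
  have hnuw : ((a,s) : ℕ × Fin 3) ≠ (e,r) := by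
    obtain ⟨b0, -, hne, -⟩ := huw; exact hne
  constructor
  · have hnotall : ¬ (s = t ∧ t = r) := by
      rintro ⟨rfl, rfl⟩
      have h1 : a ≠ c := fun h => hnuv (by rw [h])
      have h2 : c ≠ e := fun h => hnvw (by rw [h])
      have h3' : a ≠ e := fun h => hnuw (by rw [h])
      fin_cases s <;> simp [chainEdge, Prod.ext_iff] at hmu hmv hmw <;> omega
    have dec : ∀ s t r : Fin 3, ¬ (s = t ∧ t = r) →
        ((s ≠ t ∧ t ≠ r) ∨ (s ≠ t ∧ s ≠ r) ∨ (t ≠ r ∧ s ≠ r)) := by decide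
    exact dec s t r hnotall
  · exact ⟨b, hbB, ⟨hnuv, i, hle, hmu, hmv⟩, ⟨hnvw, i, hle, hmv, hmw⟩,
      ⟨hnuw, i, hle, hmu, hmw⟩⟩
end
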